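/- arXiv:2410.02424 — 6 statements merged into one kernel-verified Lean document; each statement's English description precedes it below -/
import Mathlib

section
/- Let n ∈ ℕ and let p, q ∈ ℂ[u, u⁻¹] be Laurent polynomials that are symmetric under the involution u ↦ u⁻¹ (equivalently, the coefficient of u^j in each equals the coefficient of u^{−j} for every j ∈ ℤ). If p(u)·(u + u⁻¹) + q(u)·(u − u⁻¹) = u^{−(2n+1)}, then p(u) = (1/2)·Σ_{j=0}^{2n} (−1)^j u^{2n−2j} and q(u) = −(1/2)·Σ_{j=0}^{2n} u^{2n−2j}. -/
/-!
Applying `u ↦ u⁻¹` to the equation and using the symmetry of `p` and `q` gives a second equation;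
their sum and difference decouple into `2 p (u + u⁻¹) = u^(2n+1) + u^(-(2n+1))` and
`2 q (u - u⁻¹) = u^(-(2n+1)) - u^(2n+1)`. The claimed sums, multiplied by `u ± u⁻¹`, telescope to
the same right-hand sides, and `u ± u⁻¹` can be cancelled since `ℂ[u, u⁻¹]` is a domain.
-/

open LaurentPolynomial Finset

namespace LaurentPolynomial

variable {R : Type*}

lemma invert_eq_self_of_coeff_neg [CommSemiring R] {f : R[T;T⁻¹]}
    (hf : ∀ j, f.coeff j = f.coeff (-j)) : invert f = f :=
  LaurentPolynomial.ext fun j ↦ by rw [invert_apply, ← hf]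

lemma T_one_add_T_neg_one_ne_zero [Semiring R] [Nontrivial R] :
    (T 1 + T (-1) : R[T;T⁻¹]) ≠ 0 := fun h ↦ by
  simpa using congrArg (·.coeff 1) h

lemma T_one_sub_T_neg_one_ne_zero [Ring R] [Nontrivial R] :
    (T 1 - T (-1) : R[T;T⁻¹]) ≠ 0 := fun h ↦ by
  simpa using congrArg (·.coeff 1) h

variable [CommRing R]

lemma sum_alternating_T_mul_T_one_add_T_neg_one (m : ℕ) (k : ℤ) :
    (∑ j ∈ range (m + 1), C ((-1 : R) ^ j) * T (k - 2 * j)) * (T 1 + T (-1)) =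
      T (k + 1) + C ((-1 : R) ^ m) * T (k - 2 * m - 1) := by
  have hstep (j : ℕ) : C ((-1 : R) ^ j) * T (k - 2 * j) * (T 1 + T (-1)) =
      C ((-1 : R) ^ j) * T (k - 2 * j + 1) - C ((-1 : R) ^ (j + 1)) * T (k - 2 * ↑(j + 1) + 1) := by
    rw [show k - 2 * ↑(j + 1) + 1 = k - 2 * j + -1 by push_cast; ring, pow_succ, map_mul, map_neg,
      map_one, mul_assoc, mul_add, ← T_add, ← T_add]
    ring
  rw [sum_mul, sum_congr rfl fun j _ ↦ hstep j, sum_range_sub', pow_succ, map_mul, map_neg, map_one,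
    show k - 2 * ↑(m + 1) + 1 = k - 2 * m - 1 by push_cast; ring]
  simp

lemma sum_T_mul_T_one_sub_T_neg_one (m : ℕ) (k : ℤ) :
    (∑ j ∈ range (m + 1), (T (k - 2 * j) : R[T;T⁻¹])) * (T 1 - T (-1)) =
      T (k + 1) - T (k - 2 * m - 1) := by
  have hstep (j : ℕ) : (T (k - 2 * j) : R[T;T⁻¹]) * (T 1 - T (-1)) =
      T (k - 2 * j + 1) - T (k - 2 * ↑(j + 1) + 1) := by
    rw [show k - 2 * ↑(j + 1) + 1 = k - 2 * j + -1 by push_cast; ring, mul_sub, ← T_add, ← T_add]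
  rw [sum_mul, sum_congr rfl fun j _ ↦ hstep j, sum_range_sub',
    show k - 2 * ↑(m + 1) + 1 = k - 2 * m - 1 by push_cast; ring]
  simp

end LaurentPolynomial

/-- If `p, q ∈ ℂ[u,u⁻¹]` are symmetric under `u ↦ u⁻¹` and satisfy
`p(u)·(u + u⁻¹) + q(u)·(u − u⁻¹) = u^{-(2n+1)}`, then
`p(u) = ½·∑_{j=0}^{2n} (−1)^j u^{2n−2j}` and `q(u) = −½·∑_{j=0}^{2n} u^{2n−2j}`. -/
theorem laurent_symmetric_solution (n : ℕ) (p q : LaurentPolynomial ℂ)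
    (hp : ∀ j : ℤ, p.coeff j = p.coeff (-j)) (hq : ∀ j : ℤ, q.coeff j = q.coeff (-j))
    (h : p * (T 1 + T (-1)) + q * (T 1 - T (-1)) = T (-(2 * (n : ℤ) + 1))) :
    p = LaurentPolynomial.C (1 / 2 : ℂ) *
        ∑ j ∈ range (2 * n + 1), LaurentPolynomial.C ((-1 : ℂ) ^ j) * T (2 * (n : ℤ) - 2 * j) ∧
    q = -LaurentPolynomial.C (1 / 2 : ℂ) *
        ∑ j ∈ range (2 * n + 1), T (2 * (n : ℤ) - 2 * j) := by
  have h_inv : p * (T (-1) + T 1) + q * (T (-1) - T 1) = T (2 * (n : ℤ) + 1) := by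
    simpa [invert_eq_self_of_coeff_neg hp, invert_eq_self_of_coeff_neg hq] using congrArg invert h
  have h_half : C (1 / 2 : ℂ) * 2 = 1 := by
    rw [← map_ofNat C 2, ← map_mul]; norm_num
  have h_exp : 2 * (n : ℤ) - 2 * ↑(2 * n) - 1 = -(2 * n + 1) := by push_cast; ring
  have hP := sum_alternating_T_mul_T_one_add_T_neg_one (R := ℂ) (2 * n) (2 * n)
  have hQ := sum_T_mul_T_one_sub_T_neg_one (R := ℂ) (2 * n) (2 * n)
  rw [h_exp, pow_mul, neg_one_sq, one_pow, map_one, one_mul] at hP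
  rw [h_exp] at hQ
  constructor
  · refine mul_right_cancel₀ T_one_add_T_neg_one_ne_zero ?_
    linear_combination
      C (1 / 2 : ℂ) * (h + h_inv) - C (1 / 2 : ℂ) * hP - p * (T 1 + T (-1)) * h_half
  · refine mul_right_cancel₀ T_one_sub_T_neg_one_ne_zero ?_
    linear_combination
      C (1 / 2 : ℂ) * (h - h_inv) + C (1 / 2 : ℂ) * hQ - q * (T 1 - T (-1)) * h_half
end

section
/- Let P, Q ∈ ℂ[x] be polynomials and α, β, γ ∈ ℂ with α ≠ β and γ ≠ 0. If P(x)²·(x − α) − Q(x)²·(x − β) = γ as an identity of polynomials, then there exist n ∈ ℕ, a constant c ∈ ℂ with c ≠ 0, and a sign ε ∈ {1, −1} such that P(x) = c·p_n(x − α, x − β) and Q(x) = ε·c·q_n(x − α, x − β); moreover γ = c²·(β − α)^{2n+1}. -/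
open Finset Polynomial

/-- `p_n(A,B) = ∑_{k=0}^n C(2n+1, 2k+1)·A^k·B^{n−k}`. -/
def pAux {R : Type*} [CommRing R] (n : ℕ) (A B : R) : R :=
  ∑ k ∈ range (n + 1), (Nat.choose (2 * n + 1) (2 * k + 1) : R) * A ^ k * B ^ (n - k)

/-- `q_n(A,B) = ∑_{k=0}^n C(2n+1, 2k)·A^k·B^{n−k}`. -/
def qAux {R : Type*} [CommRing R] (n : ℕ) (A B : R) : R :=
  ∑ k ∈ range (n + 1), (Nat.choose (2 * n + 1) (2 * k) : R) * A ^ k * B ^ (n - k)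

lemma pascal2 (m j : ℕ) : (m+2).choose (j+2) = m.choose j + 2 * m.choose (j+1) + m.choose (j+2) := by
  simp [Nat.choose_succ_succ]; ring

lemma pAux_zero {R : Type*} [CommRing R] (A B : R) : pAux 0 A B = 1 := by
  simp [pAux]

lemma qAux_zero {R : Type*} [CommRing R] (A B : R) : qAux 0 A B = 1 := by
  simp [qAux]

lemma pAux_succ {R : Type*} [CommRing R] (n : ℕ) (A B : R) :
    pAux (n+1) A B = (A + B) * pAux n A B + 2 * B * qAux n A B := by
  unfold pAux qAux
  rw [Finset.mul_sum, Finset.mul_sum, ← Finset.sum_add_distrib]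
  have step1 : ∀ k ∈ range (n+1),
      (A + B) * ((Nat.choose (2*n+1) (2*k+1) : R) * A ^ k * B ^ (n - k))
        + 2 * B * ((Nat.choose (2*n+1) (2*k) : R) * A ^ k * B ^ (n - k))
      = (Nat.choose (2*n+1) (2*k+1) : R) * A ^ (k+1) * B ^ (n - k)
        + ((Nat.choose (2*n+1) (2*k+1) : R) + 2 * (Nat.choose (2*n+1) (2*k) : R))
            * A ^ k * B ^ (n + 1 - k) := by
    intro k hk
    have hk' : k ≤ n := Nat.lt_succ_iff.mp (Finset.mem_range.mp hk)
    have h1 : n + 1 - k = (n - k) + 1 := by omega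
    rw [h1]
    ring
  rw [Finset.sum_congr rfl step1, Finset.sum_add_distrib]
  -- now LHS of goal: pAux (n+1), RHS: sum1 + sum2 with sum2 over range (n+1)
  have ext2 : (∑ k ∈ range (n+1),
      ((Nat.choose (2*n+1) (2*k+1) : R) + 2 * (Nat.choose (2*n+1) (2*k) : R)) * A ^ k * B ^ (n + 1 - k))
      = ∑ k ∈ range (n+2),
      ((Nat.choose (2*n+1) (2*k+1) : R) + 2 * (Nat.choose (2*n+1) (2*k) : R)) * A ^ k * B ^ (n + 1 - k) := by
    rw [Finset.sum_range_succ (n := n+1)]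
    have e1 : (2*n+1).choose (2*(n+1)+1) = 0 := Nat.choose_eq_zero_of_lt (by omega)
    have e2 : (2*n+1).choose (2*(n+1)) = 0 := Nat.choose_eq_zero_of_lt (by omega)
    rw [e1, e2]; simp
  rw [ext2, Finset.sum_range_succ' _ (n+1)]
  -- peel LHS too
  rw [Finset.sum_range_succ' _ (n+1)]
  rw [← add_assoc, ← Finset.sum_add_distrib]
  congr 1
  · apply Finset.sum_congr rfl
    intro k hk
    have h2 : n + 1 - (k+1) = n - k := by omega
    have h3 : 2*(n+1)+1 = (2*n+1)+2 := by omega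
    have h4 : 2*(k+1)+1 = (2*k+1)+2 := by omega
    have h5 : 2*(k+1) = (2*k+1)+1 := by omega
    rw [h2, h3, h4, h5, pascal2]
    push_cast
    ring
  · have h6 : (2*(n+1)+1).choose (2*0+1) = (2*n+1).choose (2*0+1) + 2 * (2*n+1).choose (2*0) := by
      simp [Nat.choose_one_right]
      omega
    rw [h6]
    push_cast
    ring

lemma qAux_succ {R : Type*} [CommRing R] (n : ℕ) (A B : R) :
    qAux (n+1) A B = (A + B) * qAux n A B + 2 * A * pAux n A B := by
  unfold pAux qAux
  rw [Finset.mul_sum, Finset.mul_sum, ← Finset.sum_add_distrib]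
  have step1 : ∀ k ∈ range (n+1),
      (A + B) * ((Nat.choose (2*n+1) (2*k) : R) * A ^ k * B ^ (n - k))
        + 2 * A * ((Nat.choose (2*n+1) (2*k+1) : R) * A ^ k * B ^ (n - k))
      = ((Nat.choose (2*n+1) (2*k) : R) + 2 * (Nat.choose (2*n+1) (2*k+1) : R))
            * A ^ (k+1) * B ^ (n - k)
        + (Nat.choose (2*n+1) (2*k) : R) * A ^ k * B ^ (n + 1 - k) := by
    intro k hk
    have hk' : k ≤ n := Nat.lt_succ_iff.mp (Finset.mem_range.mp hk)
    have h1 : n + 1 - k = (n - k) + 1 := by omega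
    rw [h1]
    ring
  rw [Finset.sum_congr rfl step1, Finset.sum_add_distrib]
  have ext2 : (∑ k ∈ range (n+1),
      (Nat.choose (2*n+1) (2*k) : R) * A ^ k * B ^ (n + 1 - k))
      = ∑ k ∈ range (n+2),
      (Nat.choose (2*n+1) (2*k) : R) * A ^ k * B ^ (n + 1 - k) := by
    rw [Finset.sum_range_succ (n := n+1)]
    have e2 : (2*n+1).choose (2*(n+1)) = 0 := Nat.choose_eq_zero_of_lt (by omega)
    rw [e2]; simp
  rw [ext2, Finset.sum_range_succ' _ (n+1)]
  rw [Finset.sum_range_succ' _ (n+1)]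
  rw [← add_assoc, ← Finset.sum_add_distrib]
  congr 1
  · apply Finset.sum_congr rfl
    intro k hk
    have h2 : n + 1 - (k+1) = n - k := by omega
    have h3 : 2*(n+1)+1 = (2*n+1)+2 := by omega
    have h4 : 2*(k+1) = (2*k)+2 := by omega
    have h5 : 2*k+2 = (2*k)+2 := by omega
    rw [h2, h3, h4, pascal2]
    push_cast
    ring

lemma norm_id {R : Type*} [CommRing R] (n : ℕ) (A B : R) :
    A * (pAux n A B)^2 - B * (qAux n A B)^2 = (A - B)^(2*n+1) := by
  induction n with
  | zero => simp [pAux_zero, qAux_zero]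
  | succ n ih =>
    rw [pAux_succ, qAux_succ]
    have h : 2*(n+1)+1 = (2*n+1)+2 := by omega
    rw [h, pow_add]
    linear_combination ((A-B)^2) * ih

lemma down_p {R : Type*} [CommRing R] (m : ℕ) (A B : R) :
    (A + B) * pAux (m+1) A B - 2 * B * qAux (m+1) A B = (A - B)^2 * pAux m A B := by
  rw [pAux_succ, qAux_succ]; ring

lemma down_q {R : Type*} [CommRing R] (m : ℕ) (A B : R) :
    (A + B) * qAux (m+1) A B - 2 * A * pAux (m+1) A B = (A - B)^2 * qAux m A B := by
  rw [pAux_succ, qAux_succ]; ring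

-- coefficient of p * (X - C a)
lemma coeff_mul_X_sub_C' (p : Polynomial ℂ) (a : ℂ) (k : ℕ) :
    (p * (X - Polynomial.C a)).coeff (k+1) = p.coeff k - a * p.coeff (k+1) := by
  rw [mul_sub, Polynomial.coeff_sub, Polynomial.coeff_mul_X, Polynomial.coeff_mul_C]
  ring

lemma coeff_sq_top (p : Polynomial ℂ) : (p^2).coeff (p.natDegree + p.natDegree) = p.leadingCoeff^2 := by
  rw [sq, sq, Polynomial.coeff_mul_degree_add_degree]

lemma coeff_sq_subtop (p : Polynomial ℂ) (n : ℕ) (hn : 1 ≤ n) (h : p.natDegree ≤ n) :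
    (p^2).coeff (n + n - 1) = 2 * p.coeff n * p.coeff (n-1) := by
  rw [sq, Polynomial.coeff_mul]
  rw [Finset.Nat.sum_antidiagonal_eq_sum_range_succ_mk]
  have hsub : ({n-1, n} : Finset ℕ) ⊆ range (n + n - 1 + 1) := by
    intro x hx
    simp only [Finset.mem_insert, Finset.mem_singleton] at hx
    rcases hx with h1 | h1 <;> simp [h1] <;> omega
  rw [← Finset.sum_subset hsub]
  · rw [Finset.sum_pair (by omega : n - 1 ≠ n)]
    have e1 : n + n - 1 - (n - 1) = n := by omega
    have e2 : n + n - 1 - n = n - 1 := by omega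
    rw [e1, e2]; ring
  · intro x hx hxn
    simp only [Finset.mem_range] at hx
    simp only [Finset.mem_insert, Finset.mem_singleton, not_or] at hxn
    rcases lt_or_ge n x with hlt | hle
    · rw [Polynomial.coeff_eq_zero_of_natDegree_lt (lt_of_le_of_lt h hlt)]
      ring
    · have : n < n + n - 1 - x := by omega
      rw [Polynomial.coeff_eq_zero_of_natDegree_lt (lt_of_le_of_lt h this)]
      ring

lemma setup (α β γ : ℂ) (hγ : γ ≠ 0) (P Q : Polynomial ℂ)
    (h : P ^ 2 * (X - Polynomial.C α) - Q ^ 2 * (X - Polynomial.C β) = Polynomial.C γ) :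
    P ≠ 0 ∧ Q ≠ 0 ∧ Q.natDegree = P.natDegree ∧ Q.leadingCoeff^2 = P.leadingCoeff^2 := by
  have hP : P ≠ 0 := by
    intro h0
    subst h0
    rw [show (0:Polynomial ℂ)^2 * (X - Polynomial.C α) - Q ^ 2 * (X - Polynomial.C β)
        = -(Q ^ 2 * (X - Polynomial.C β)) by ring] at h
    by_cases hQ : Q = 0
    · subst hQ; simp at h; exact hγ (by simpa using h.symm)
    · have h2 : Q ^ 2 * (X - Polynomial.C β) = Polynomial.C (-γ) := by
        rw [map_neg, ← h]; ring
      have := congrArg Polynomial.natDegree h2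
      rw [Polynomial.natDegree_mul (pow_ne_zero _ hQ) (Polynomial.X_sub_C_ne_zero β),
        Polynomial.natDegree_pow, Polynomial.natDegree_X_sub_C, Polynomial.natDegree_C] at this
      omega
  have hQ : Q ≠ 0 := by
    intro h0
    subst h0
    rw [show P^2 * (X - Polynomial.C α) - (0:Polynomial ℂ) ^ 2 * (X - Polynomial.C β)
        = P ^ 2 * (X - Polynomial.C α) by ring] at h
    have := congrArg Polynomial.natDegree h
    rw [Polynomial.natDegree_mul (pow_ne_zero _ hP) (Polynomial.X_sub_C_ne_zero α),
      Polynomial.natDegree_pow, Polynomial.natDegree_X_sub_C, Polynomial.natDegree_C] at this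
    omega
  have hdeg : Q.natDegree = P.natDegree := by
    have h2 : P ^ 2 * (X - Polynomial.C α) = Polynomial.C γ + Q ^ 2 * (X - Polynomial.C β) := by
      rw [← h]; ring
    have hd1 : (P ^ 2 * (X - Polynomial.C α)).natDegree = 2 * P.natDegree + 1 := by
      rw [Polynomial.natDegree_mul (pow_ne_zero _ hP) (Polynomial.X_sub_C_ne_zero α),
        Polynomial.natDegree_pow, Polynomial.natDegree_X_sub_C]
    have hd2 : (Q ^ 2 * (X - Polynomial.C β)).natDegree = 2 * Q.natDegree + 1 := by
      rw [Polynomial.natDegree_mul (pow_ne_zero _ hQ) (Polynomial.X_sub_C_ne_zero β),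
        Polynomial.natDegree_pow, Polynomial.natDegree_X_sub_C]
    have hlt : (Polynomial.C γ).natDegree < (Q ^ 2 * (X - Polynomial.C β)).natDegree := by
      rw [Polynomial.natDegree_C, hd2]; omega
    have := congrArg Polynomial.natDegree h2
    rw [hd1, Polynomial.natDegree_add_eq_right_of_natDegree_lt hlt, hd2] at this
    omega
  refine ⟨hP, hQ, hdeg, ?_⟩
  set n := P.natDegree with hn
  have hcoeff := congrArg (fun p => Polynomial.coeff p (n + n + 1)) h
  simp only [Polynomial.coeff_sub] at hcoeff
  rw [show n + n + 1 = (n+n) + 1 by ring, coeff_mul_X_sub_C', coeff_mul_X_sub_C'] at hcoeff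
  have hp2 : (P^2).coeff (n+n) = P.leadingCoeff ^ 2 := coeff_sq_top P
  have hq2 : (Q^2).coeff (n+n) = Q.leadingCoeff ^ 2 := by
    have := coeff_sq_top Q
    rwa [hdeg] at this
  have hptop : (P^2).coeff (n+n+1) = 0 := by
    apply Polynomial.coeff_eq_zero_of_natDegree_lt
    rw [Polynomial.natDegree_pow]; omega
  have hqtop : (Q^2).coeff (n+n+1) = 0 := by
    apply Polynomial.coeff_eq_zero_of_natDegree_lt
    rw [Polynomial.natDegree_pow, hdeg]; omega
  rw [hp2, hq2, hptop, hqtop, Polynomial.coeff_C] at hcoeff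
  simp at hcoeff
  linear_combination -hcoeff

lemma sign_of_sq (ε : ℂ) (h : ε^2 = 1) : ε = 1 ∨ ε = -1 := by
  have h2 : (ε - 1) * (ε + 1) = 0 := by linear_combination h
  rcases mul_eq_zero.mp h2 with h3 | h3
  · left; linear_combination h3
  · right; linear_combination h3

lemma base_case (α β γ : ℂ) (hγ : γ ≠ 0) (P Q : Polynomial ℂ)
    (h : P ^ 2 * (X - Polynomial.C α) - Q ^ 2 * (X - Polynomial.C β) = Polynomial.C γ)
    (hd : P.natDegree = 0) :
    ∃ (n : ℕ) (c ε : ℂ), (ε = 1 ∨ ε = -1) ∧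
      P = Polynomial.C c * pAux n (X - Polynomial.C α) (X - Polynomial.C β) ∧
      Q = Polynomial.C (ε * c) * qAux n (X - Polynomial.C α) (X - Polynomial.C β) := by
  obtain ⟨hP, hQ, hdeg, hlead⟩ := setup α β γ hγ P Q h
  have hPc : P = Polynomial.C (P.coeff 0) := Polynomial.eq_C_of_natDegree_eq_zero hd
  have hQc : Q = Polynomial.C (Q.coeff 0) := Polynomial.eq_C_of_natDegree_eq_zero (by omega)
  set c := P.coeff 0 with hc
  set d := Q.coeff 0 with hdd
  have hc0 : c ≠ 0 := by
    intro h0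
    apply hP
    rw [hPc, h0, map_zero]
  have hlead' : d^2 = c^2 := by
    have e1 : P.leadingCoeff = c := by rw [Polynomial.leadingCoeff, hd]
    have e2 : Q.leadingCoeff = d := by rw [Polynomial.leadingCoeff, hdeg, hd]
    rw [e1, e2] at hlead; exact hlead
  refine ⟨0, c, d * c⁻¹, ?_, ?_, ?_⟩
  · apply sign_of_sq
    field_simp
    exact hlead'
  · rw [pAux_zero, mul_one, ← hPc]
  · rw [qAux_zero, mul_one, hQc]
    congr 1
    field_simp

lemma good (α β : ℂ) (hαβ : α ≠ β) :
    ∀ N : ℕ, ∀ P Q : Polynomial ℂ, ∀ γ : ℂ, P.natDegree ≤ N → γ ≠ 0 →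
    P ^ 2 * (X - Polynomial.C α) - Q ^ 2 * (X - Polynomial.C β) = Polynomial.C γ →
    ∃ (n : ℕ) (c ε : ℂ), (ε = 1 ∨ ε = -1) ∧
      P = Polynomial.C c * pAux n (X - Polynomial.C α) (X - Polynomial.C β) ∧
      Q = Polynomial.C (ε * c) * qAux n (X - Polynomial.C α) (X - Polynomial.C β) := by
  intro N
  induction N with
  | zero =>
    intro P Q γ hd hγ h
    exact base_case α β γ hγ P Q h (Nat.le_zero.mp hd)
  | succ N ih =>
    intro P Q γ hdN hγ h
    by_cases hd0 : P.natDegree = 0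
    · exact base_case α β γ hγ P Q h hd0
    obtain ⟨hP, hQ, hdeg, hlead⟩ := setup α β γ hγ P Q h
    obtain ⟨n, hn⟩ : ∃ n, n = P.natDegree := ⟨_, rfl⟩
    rw [← hn] at hdeg hdN
    have hn1 : 1 ≤ n := by omega
    have hβα : (β - α) ≠ 0 := sub_ne_zero_of_ne (Ne.symm hαβ)
    have hC2 : Polynomial.C (2:ℂ) = (2 : Polynomial ℂ) := map_ofNat Polynomial.C 2
    -- normalize the sign of Q
    obtain ⟨S, hSsq, hSdeg, hSlead, hSQ⟩ :
        ∃ S : Polynomial ℂ, S ^ 2 = Q ^ 2 ∧ S.natDegree = n ∧ S.coeff n = P.coeff n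
          ∧ (Q = S ∨ Q = -S) := by
      by_cases hs : Q.leadingCoeff = P.leadingCoeff
      · refine ⟨Q, rfl, hdeg, ?_, Or.inl rfl⟩
        have e0 : Q.coeff Q.natDegree = P.coeff P.natDegree := by
          rw [Polynomial.coeff_natDegree, Polynomial.coeff_natDegree]; exact hs
        rw [hdeg, ← hn] at e0
        exact e0
      · have h2 : (Q.leadingCoeff - P.leadingCoeff) * (Q.leadingCoeff + P.leadingCoeff) = 0 := by
          linear_combination hlead
        have h3 : Q.leadingCoeff + P.leadingCoeff = 0 := by
          rcases mul_eq_zero.mp h2 with h4 | h4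
          · exact absurd (by linear_combination h4) hs
          · exact h4
        refine ⟨-Q, by ring, by rw [Polynomial.natDegree_neg]; exact hdeg, ?_, Or.inr (by ring)⟩
        rw [Polynomial.coeff_neg]
        have e1 : Q.coeff n = Q.leadingCoeff := by rw [Polynomial.leadingCoeff, hdeg]
        have e2 : P.coeff n = P.leadingCoeff := by rw [Polynomial.leadingCoeff, ← hn]
        rw [e1, e2]; linear_combination -h3
    have h' : P ^ 2 * (X - Polynomial.C α) - S ^ 2 * (X - Polynomial.C β) = Polynomial.C γ := by
      rw [hSsq]; exact h
    have hcc0 : P.coeff n ≠ 0 := by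
      rw [show P.coeff n = P.leadingCoeff by rw [Polynomial.leadingCoeff, ← hn]]
      exact Polynomial.leadingCoeff_ne_zero.mpr hP
    -- extract coefficient at n+n
    have hcoeff := congrArg (fun p => Polynomial.coeff p (n + n)) h'
    simp only [Polynomial.coeff_sub] at hcoeff
    rw [show n + n = (n + n - 1) + 1 by omega, coeff_mul_X_sub_C', coeff_mul_X_sub_C']
      at hcoeff
    rw [coeff_sq_subtop P n hn1 (le_of_eq hn.symm),
      coeff_sq_subtop S n hn1 (le_of_eq hSdeg)] at hcoeff
    rw [show n + n - 1 + 1 = n + n by omega] at hcoeff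
    have hp2 : (P ^ 2).coeff (n + n) = P.coeff n ^ 2 := by
      have := coeff_sq_top P
      rw [← hn] at this
      rw [this, Polynomial.leadingCoeff, ← hn]
    have hq2 : (S ^ 2).coeff (n + n) = S.coeff n ^ 2 := by
      have := coeff_sq_top S
      rw [hSdeg] at this
      rw [this, Polynomial.leadingCoeff, hSdeg]
    rw [hp2, hq2, hSlead, Polynomial.coeff_C, if_neg (by omega : ¬ n + n = 0)] at hcoeff
    have e1 : 2 * P.coeff (n-1) - 2 * S.coeff (n-1) + (β - α) * P.coeff n = 0 := by
      have h2 : P.coeff n * (2 * P.coeff (n-1) - 2 * S.coeff (n-1) + (β - α) * P.coeff n) = 0 := by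
        linear_combination hcoeff
      exact (mul_eq_zero.mp h2).resolve_left hcc0
    -- descent polynomials
    obtain ⟨N₁, hN₁⟩ : ∃ N₁ : Polynomial ℂ, N₁ = P * (X - Polynomial.C α)
        + P * (X - Polynomial.C β) - 2 * (S * (X - Polynomial.C β)) := ⟨_, rfl⟩
    obtain ⟨M₁, hM₁⟩ : ∃ M₁ : Polynomial ℂ, M₁ = S * (X - Polynomial.C α)
        + S * (X - Polynomial.C β) - 2 * (P * (X - Polynomial.C α)) := ⟨_, rfl⟩
    have coeffN : ∀ k, N₁.coeff (k+1) = (P.coeff k - α * P.coeff (k+1))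
        + (P.coeff k - β * P.coeff (k+1)) - 2 * (S.coeff k - β * S.coeff (k+1)) := by
      intro k
      rw [hN₁, Polynomial.coeff_sub, Polynomial.coeff_add, coeff_mul_X_sub_C',
        coeff_mul_X_sub_C', ← hC2, Polynomial.coeff_C_mul, coeff_mul_X_sub_C']
    have hNb : N₁.natDegree ≤ n + 1 := by
      have b1 : (P * (X - Polynomial.C α)).natDegree ≤ n + 1 :=
        le_trans Polynomial.natDegree_mul_le
          (by rw [Polynomial.natDegree_X_sub_C]; omega)
      have b2 : (P * (X - Polynomial.C β)).natDegree ≤ n + 1 :=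
        le_trans Polynomial.natDegree_mul_le
          (by rw [Polynomial.natDegree_X_sub_C]; omega)
      have bS : (S * (X - Polynomial.C β)).natDegree ≤ n + 1 :=
        le_trans Polynomial.natDegree_mul_le
          (by rw [Polynomial.natDegree_X_sub_C]; omega)
      have b3 : ((2 : Polynomial ℂ) * (S * (X - Polynomial.C β))).natDegree ≤ n + 1 := by
        rw [← hC2]
        exact le_trans (Polynomial.natDegree_C_mul_le _ _) bS
      rw [hN₁]
      exact le_trans (Polynomial.natDegree_sub_le _ _)
        (max_le (le_trans (Polynomial.natDegree_add_le _ _) (max_le b1 b2)) b3)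
    have hN1deg : N₁.natDegree ≤ n - 1 := by
      rw [Polynomial.natDegree_le_iff_coeff_eq_zero]
      intro m hm
      rcases (by omega : m = n ∨ m = n + 1 ∨ n + 2 ≤ m) with hm' | hm' | hm'
      · subst hm'
        have hc := coeffN (m-1)
        rw [show m - 1 + 1 = m by omega] at hc
        rw [hc, hSlead]
        linear_combination e1
      · subst hm'
        have hc := coeffN n
        have z1 : P.coeff (n+1) = 0 := Polynomial.coeff_eq_zero_of_natDegree_lt (by omega)
        have z2 : S.coeff (n+1) = 0 := Polynomial.coeff_eq_zero_of_natDegree_lt (by omega)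
        rw [hc, z1, z2, hSlead]
        ring
      · exact Polynomial.coeff_eq_zero_of_natDegree_lt (by omega)
    have hAB : (X - Polynomial.C α) - (X - Polynomial.C β) = Polynomial.C (β - α) := by
      rw [map_sub]; ring
    -- normalized descent pair
    obtain ⟨u, hu⟩ : ∃ u : ℂ, u = ((β - α) ^ 2)⁻¹ := ⟨_, rfl⟩
    have hu0 : u ≠ 0 := by rw [hu]; exact inv_ne_zero (pow_ne_zero 2 hβα)
    have hup : u * (β - α) ^ 2 = 1 := by rw [hu]; exact inv_mul_cancel₀ (pow_ne_zero 2 hβα)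
    obtain ⟨P', hP'⟩ : ∃ P' : Polynomial ℂ, P' = Polynomial.C u * N₁ := ⟨_, rfl⟩
    obtain ⟨Q', hQ'⟩ : ∃ Q' : Polynomial ℂ, Q' = Polynomial.C u * M₁ := ⟨_, rfl⟩
    have key : N₁ ^ 2 * (X - Polynomial.C α) - M₁ ^ 2 * (X - Polynomial.C β)
        = Polynomial.C ((β - α) ^ 2) * Polynomial.C γ := by
      have hr : N₁ ^ 2 * (X - Polynomial.C α) - M₁ ^ 2 * (X - Polynomial.C β)
          = ((X - Polynomial.C α) - (X - Polynomial.C β)) ^ 2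
            * (P ^ 2 * (X - Polynomial.C α) - S ^ 2 * (X - Polynomial.C β)) := by
        rw [hN₁, hM₁]; ring
      rw [hr, h', hAB, ← map_pow]
    have heq' : P' ^ 2 * (X - Polynomial.C α) - Q' ^ 2 * (X - Polynomial.C β)
        = Polynomial.C (u * γ) := by
      have h1 : P' ^ 2 * (X - Polynomial.C α) - Q' ^ 2 * (X - Polynomial.C β)
          = Polynomial.C u ^ 2 * (N₁ ^ 2 * (X - Polynomial.C α)
            - M₁ ^ 2 * (X - Polynomial.C β)) := by
        rw [hP', hQ']; ring
      rw [h1, key, ← map_pow, ← map_mul, ← map_mul]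
      congr 1
      rw [hu]
      field_simp
    have hdP' : P'.natDegree ≤ N := by
      have h1 : P'.natDegree ≤ N₁.natDegree := by
        rw [hP']; exact Polynomial.natDegree_C_mul_le u N₁
      omega
    obtain ⟨m, c', ε', hε', hP'form, hQ'form⟩ :=
      ih P' Q' (u * γ) hdP' (mul_ne_zero hu0 hγ) heq'
    -- reconstruction identities
    have hrecP : P = ((X - Polynomial.C α) + (X - Polynomial.C β)) * P'
        + 2 * (X - Polynomial.C β) * Q' := by
      have h1 : ((X - Polynomial.C α) + (X - Polynomial.C β)) * P'
          + 2 * (X - Polynomial.C β) * Q'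
          = Polynomial.C u * (((X - Polynomial.C α) - (X - Polynomial.C β)) ^ 2 * P) := by
        rw [hP', hQ', hN₁, hM₁]; ring
      rw [h1, hAB, ← map_pow, ← mul_assoc, ← map_mul, hup, map_one, one_mul]
    have hrecS : S = ((X - Polynomial.C α) + (X - Polynomial.C β)) * Q'
        + 2 * (X - Polynomial.C α) * P' := by
      have h1 : ((X - Polynomial.C α) + (X - Polynomial.C β)) * Q'
          + 2 * (X - Polynomial.C α) * P'
          = Polynomial.C u * (((X - Polynomial.C α) - (X - Polynomial.C β)) ^ 2 * S) := by
        rw [hP', hQ', hN₁, hM₁]; ring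
      rw [h1, hAB, ← map_pow, ← mul_assoc, ← map_mul, hup, map_one, one_mul]
    rcases hε' with hε' | hε'
    · -- ε' = 1 : go up one step
      subst hε'
      rw [one_mul] at hQ'form
      have hPf : P = Polynomial.C c'
          * pAux (m+1) (X - Polynomial.C α) (X - Polynomial.C β) := by
        rw [hrecP, hP'form, hQ'form]
        linear_combination (- Polynomial.C c')
          * (pAux_succ m (X - Polynomial.C α) (X - Polynomial.C β))
      have hSf : S = Polynomial.C c'
          * qAux (m+1) (X - Polynomial.C α) (X - Polynomial.C β) := by
        rw [hrecS, hP'form, hQ'form]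
        linear_combination (- Polynomial.C c')
          * (qAux_succ m (X - Polynomial.C α) (X - Polynomial.C β))
      rcases hSQ with hq | hq
      · exact ⟨m+1, c', 1, Or.inl rfl, hPf, by rw [hq, hSf, one_mul]⟩
      · refine ⟨m+1, c', -1, Or.inr rfl, hPf, ?_⟩
        rw [hq, hSf, show (-1 : ℂ) * c' = -c' by ring, map_neg]
        ring
    · -- ε' = -1 : go down one step
      subst hε'
      rw [show (-1 : ℂ) * c' = -c' by ring, map_neg] at hQ'form
      rcases Nat.eq_zero_or_pos m with hm | hm
      · -- m = 0
        subst hm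
        have hPf : P = Polynomial.C (c' * (β - α))
            * pAux 0 (X - Polynomial.C α) (X - Polynomial.C β) := by
          rw [hrecP, hP'form, hQ'form, pAux_zero, qAux_zero, Polynomial.C_mul]
          linear_combination (Polynomial.C c') * hAB
        have hSf : S = Polynomial.C (c' * (β - α))
            * qAux 0 (X - Polynomial.C α) (X - Polynomial.C β) := by
          rw [hrecS, hP'form, hQ'form, pAux_zero, qAux_zero, Polynomial.C_mul]
          linear_combination (Polynomial.C c') * hAB
        rcases hSQ with hq | hq
        · exact ⟨0, c' * (β - α), 1, Or.inl rfl, hPf, by rw [hq, hSf, one_mul]⟩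
        · refine ⟨0, c' * (β - α), -1, Or.inr rfl, hPf, ?_⟩
          rw [hq, hSf, show (-1 : ℂ) * (c' * (β - α)) = -(c' * (β - α)) by ring, map_neg]
          ring
      · -- m = m₀ + 1
        obtain ⟨m₀, rfl⟩ : ∃ m₀, m = m₀ + 1 := ⟨m - 1, by omega⟩
        have hPf : P = Polynomial.C (c' * (β - α) ^ 2)
            * pAux m₀ (X - Polynomial.C α) (X - Polynomial.C β) := by
          rw [hrecP, hP'form, hQ'form, Polynomial.C_mul, map_pow]
          linear_combination (Polynomial.C c')
              * (down_p m₀ (X - Polynomial.C α) (X - Polynomial.C β))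
            + (Polynomial.C c' * pAux m₀ (X - Polynomial.C α) (X - Polynomial.C β)
                * ((X - Polynomial.C α) - (X - Polynomial.C β) + Polynomial.C (β - α))) * hAB
        have hSf : S = Polynomial.C (-(c' * (β - α) ^ 2))
            * qAux m₀ (X - Polynomial.C α) (X - Polynomial.C β) := by
          rw [hrecS, hP'form, hQ'form, map_neg, Polynomial.C_mul, map_pow]
          linear_combination (- Polynomial.C c')
              * (down_q m₀ (X - Polynomial.C α) (X - Polynomial.C β))
            - (Polynomial.C c' * qAux m₀ (X - Polynomial.C α) (X - Polynomial.C β)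
                * ((X - Polynomial.C α) - (X - Polynomial.C β) + Polynomial.C (β - α))) * hAB
        rcases hSQ with hq | hq
        · refine ⟨m₀, c' * (β - α) ^ 2, -1, Or.inr rfl, hPf, ?_⟩
          rw [hq, hSf, show (-1 : ℂ) * (c' * (β - α) ^ 2) = -(c' * (β - α) ^ 2) by ring]
        · refine ⟨m₀, c' * (β - α) ^ 2, 1, Or.inl rfl, hPf, ?_⟩
          rw [hq, hSf, one_mul, map_neg]
          ring


/-- If `P(x)²·(x − α) − Q(x)²·(x − β) = γ` with `α ≠ β` and `γ ≠ 0`, then up to a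
nonzero constant `c` and a sign `ε`, `P = c·p_n(x−α, x−β)` and `Q = ε·c·q_n(x−α, x−β)`,
and `γ = c²·(β−α)^{2n+1}`. -/
theorem sqrt_letter_classification (P Q : Polynomial ℂ) (α β γ : ℂ)
    (hαβ : α ≠ β) (hγ : γ ≠ 0)
    (h : P ^ 2 * (X - Polynomial.C α) - Q ^ 2 * (X - Polynomial.C β) = Polynomial.C γ) :
    ∃ (n : ℕ) (c ε : ℂ), c ≠ 0 ∧ (ε = 1 ∨ ε = -1) ∧
      P = Polynomial.C c * pAux n (X - Polynomial.C α) (X - Polynomial.C β) ∧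
      Q = Polynomial.C (ε * c) * qAux n (X - Polynomial.C α) (X - Polynomial.C β) ∧
      γ = c ^ 2 * (β - α) ^ (2 * n + 1) := by
  obtain ⟨n, c, ε, hε, hPf, hQf⟩ := good α β hαβ P.natDegree P Q γ le_rfl hγ h
  have hε2 : ε ^ 2 = 1 := by rcases hε with h' | h' <;> rw [h'] <;> ring
  have hABpow : (X - Polynomial.C α) - (X - Polynomial.C β) = Polynomial.C (β - α) := by
    rw [map_sub]; ring
  have hCeps : Polynomial.C (ε * c) ^ 2 = Polynomial.C c ^ 2 := by
    rw [← map_pow, ← map_pow]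
    congr 1
    rw [mul_pow, hε2, one_mul]
  have hγeq : γ = c ^ 2 * (β - α) ^ (2 * n + 1) := by
    apply Polynomial.C_injective
    rw [← h, hPf, hQf]
    have e : (Polynomial.C c * pAux n (X - Polynomial.C α) (X - Polynomial.C β)) ^ 2
          * (X - Polynomial.C α)
        - (Polynomial.C (ε * c) * qAux n (X - Polynomial.C α) (X - Polynomial.C β)) ^ 2
          * (X - Polynomial.C β)
        = Polynomial.C c ^ 2 * ((X - Polynomial.C α)
            * (pAux n (X - Polynomial.C α) (X - Polynomial.C β)) ^ 2
          - (X - Polynomial.C β)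
            * (qAux n (X - Polynomial.C α) (X - Polynomial.C β)) ^ 2)
          + (Polynomial.C (ε * c) ^ 2 - Polynomial.C c ^ 2)
            * (- (X - Polynomial.C β)
               * (qAux n (X - Polynomial.C α) (X - Polynomial.C β)) ^ 2) := by
      ring
    rw [e, hCeps, sub_self, zero_mul, add_zero,
      norm_id n (X - Polynomial.C α) (X - Polynomial.C β), hABpow,
      ← map_pow, ← map_pow, ← map_mul]
  have hc0 : c ≠ 0 := by
    intro h0
    apply hγ
    rw [hγeq, h0]
    ring
  exact ⟨n, c, ε, hc0, hε, hPf, hQf, hγeq⟩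
end

section
/- For every commutative ring R, all elements A, B ∈ R, and every n ∈ ℕ, the identity p_n(A, B)²·A − q_n(A, B)²·B = (A − B)^{2n+1} holds. -/
open Finset

lemma map_pAux {R S : Type*} [CommRing R] [CommRing S] (φ : R →+* S) (n : ℕ) (A B : R) :
    φ (pAux n A B) = pAux n (φ A) (φ B) := by
  simp [pAux, map_sum]

lemma map_qAux {R S : Type*} [CommRing R] [CommRing S] (φ : R →+* S) (n : ℕ) (A B : R) :
    φ (qAux n A B) = qAux n (φ A) (φ B) := by
  simp [qAux, map_sum]

lemma sum_range_even_odd {M : Type*} [AddCommMonoid M] (f : ℕ → M) (m : ℕ) :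
    ∑ j ∈ range (2 * m), f j = (∑ k ∈ range m, f (2 * k)) + ∑ k ∈ range m, f (2 * k + 1) := by
  induction m with
  | zero => simp
  | succ m ih =>
      rw [show 2 * (m + 1) = 2 * m + 1 + 1 from by ring, sum_range_succ, sum_range_succ, ih,
        sum_range_succ, sum_range_succ]
      abel

lemma key_pq {S : Type*} [CommRing S] (s t : S) (n : ℕ) :
    (s + t) ^ (2 * n + 1) = s * pAux n (s ^ 2) (t ^ 2) + t * qAux n (s ^ 2) (t ^ 2) := by
  rw [add_pow, show 2 * n + 1 + 1 = 2 * (n + 1) from by ring, sum_range_even_odd,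
    pAux, qAux, Finset.mul_sum, Finset.mul_sum, add_comm]
  congr 1
  · refine Finset.sum_congr rfl fun k hk => ?_
    simp only [mem_range] at hk
    rw [show 2 * n + 1 - (2 * k + 1) = 2 * (n - k) from by omega]
    ring
  · refine Finset.sum_congr rfl fun k hk => ?_
    simp only [mem_range] at hk
    rw [show 2 * n + 1 - 2 * k = 2 * (n - k) + 1 from by omega]
    ring

lemma of_injective_of_monic {R : Type*} [CommRing R] [Nontrivial R] {g : Polynomial R}
    (hg : g.Monic) (hdeg : 0 < g.natDegree) : Function.Injective (AdjoinRoot.of g) := by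
  have hC : ∀ r : R, (Polynomial.C r) %ₘ g = Polynomial.C r := fun r =>
    (Polynomial.modByMonic_eq_self_iff hg).mpr
      (lt_of_le_of_lt Polynomial.degree_C_le (Polynomial.natDegree_pos_iff_degree_pos.mp hdeg))
  intro a b h
  have h' : AdjoinRoot.mk g (Polynomial.C a) = AdjoinRoot.mk g (Polynomial.C b) := h
  have h2 := congrArg (fun x => (AdjoinRoot.modByMonicHom hg x).coeff 0) h'
  simp only [AdjoinRoot.modByMonicHom_mk, hC, Polynomial.coeff_C_zero] at h2
  exact h2

/-- `p_n(A,B)²·A − q_n(A,B)²·B = (A − B)^{2n+1}` in any commutative ring. -/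
theorem pAux_sq_mul_sub_qAux_sq_mul {R : Type*} [CommRing R] (A B : R) (n : ℕ) :
    pAux n A B ^ 2 * A - qAux n A B ^ 2 * B = (A - B) ^ (2 * n + 1) := by
  nontriviality R
  set f1 : Polynomial R := Polynomial.X ^ 2 - Polynomial.C A with hf1def
  have hf1 : f1.Monic := Polynomial.monic_X_pow_sub_C A two_ne_zero
  have hd1 : 0 < f1.natDegree := by
    rw [hf1def, Polynomial.natDegree_X_pow_sub_C]; norm_num
  set S1 := AdjoinRoot f1 with hS1
  set f2 : Polynomial S1 := Polynomial.X ^ 2 - Polynomial.C (AdjoinRoot.of f1 B) with hf2def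
  haveI : Nontrivial S1 := (of_injective_of_monic hf1 hd1).nontrivial
  have hf2 : f2.Monic := Polynomial.monic_X_pow_sub_C _ two_ne_zero
  have hd2 : 0 < f2.natDegree := by
    rw [hf2def, Polynomial.natDegree_X_pow_sub_C]; norm_num
  set φ : R →+* AdjoinRoot f2 := (AdjoinRoot.of f2).comp (AdjoinRoot.of f1) with hφdef
  have hφ : Function.Injective φ :=
    (of_injective_of_monic hf2 hd2).comp (of_injective_of_monic hf1 hd1)
  set s : AdjoinRoot f2 := AdjoinRoot.of f2 (AdjoinRoot.root f1) with hsdef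
  set t : AdjoinRoot f2 := AdjoinRoot.root f2 with htdef
  have hs : s ^ 2 = φ A := by
    have h0 := AdjoinRoot.eval₂_root f1
    rw [hf1def] at h0
    simp only [Polynomial.eval₂_sub, Polynomial.eval₂_pow, Polynomial.eval₂_X,
      Polynomial.eval₂_C, sub_eq_zero] at h0
    rw [hsdef, hφdef, RingHom.comp_apply, ← map_pow, h0]
  have ht : t ^ 2 = φ B := by
    have h0 := AdjoinRoot.eval₂_root f2
    rw [hf2def] at h0
    simp only [Polynomial.eval₂_sub, Polynomial.eval₂_pow, Polynomial.eval₂_X,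
      Polynomial.eval₂_C, sub_eq_zero] at h0
    rw [htdef, hφdef]
    simpa using h0
  apply hφ
  rw [map_sub, map_mul, map_mul, map_pow, map_pow, map_pAux, map_qAux, map_pow, map_sub,
    ← hs, ← ht]
  have h1 := key_pq s t n
  have h2 := key_pq s (-t) n
  rw [neg_sq] at h2
  calc pAux n (s ^ 2) (t ^ 2) ^ 2 * s ^ 2 - qAux n (s ^ 2) (t ^ 2) ^ 2 * t ^ 2
      = (s * pAux n (s ^ 2) (t ^ 2) + t * qAux n (s ^ 2) (t ^ 2)) *
        (s * pAux n (s ^ 2) (t ^ 2) + -t * qAux n (s ^ 2) (t ^ 2)) := by ring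
    _ = (s + t) ^ (2 * n + 1) * (s + -t) ^ (2 * n + 1) := by rw [h1, h2]
    _ = (s ^ 2 - t ^ 2) ^ (2 * n + 1) := by rw [← mul_pow]; ring_nf
end

section
/- For every natural number q, the alternating sum Σ_{k=0}^q (−1)^k·C(q, k)/(2k + 1) equals 4^q·(q!)²/(2q + 1)!, where C(q, k) denotes the binomial coefficient. Equivalently, Σ_{k=0}^q (−1)^{q−k}·C(q, k)/(k + 1/2) = 2·(−1)^q·(2q)!!/(2q+1)!!. -/
open Finset Nat

lemma key : ∀ (q : ℕ) (x : ℚ), (∀ k : ℕ, k ≤ q → x + k ≠ 0) →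
    (∑ k ∈ range (q+1), (-1:ℚ)^k * (q.choose k : ℚ) / (x + k))
      = (q.factorial : ℚ) / ∏ k ∈ range (q+1), (x + (k:ℚ)) := by
  intro q
  induction q with
  | zero => intro x hx; simp
  | succ q ih =>
    intro x hx
    have hx0 : x ≠ 0 := by simpa using hx 0 (by omega)
    have hxq : ∀ k : ℕ, k ≤ q → x + k ≠ 0 := fun k hk => hx k (by omega)
    have hx1 : ∀ k : ℕ, k ≤ q → (x+1) + k ≠ 0 := by
      intro k hk
      have h := hx (k+1) (by omega)
      push_cast at h
      intro hc; exact h (by linarith)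
    have h2 : (∑ i ∈ range (q+1), (-1:ℚ)^(i+1) * (q.choose (i+1):ℚ)/(x+((i:ℚ)+1)))
        = (∑ k ∈ range (q+1), (-1:ℚ)^k * (q.choose k:ℚ)/(x+k)) - x⁻¹ := by
      have hs := Finset.sum_range_succ' (fun k => (-1:ℚ)^k * (q.choose k:ℚ)/(x+k)) (q+1)
      have hs2 := Finset.sum_range_succ (fun k => (-1:ℚ)^k * (q.choose k:ℚ)/(x+k)) (q+1)
      simp only [Nat.choose_succ_self, Nat.cast_zero, Nat.choose_zero_right] at hs hs2
      push_cast at hs hs2 ⊢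
      rw [hs2] at hs
      simp at hs
      linarith [hs]
    have h1 : (∑ i ∈ range (q+1), (-1:ℚ)^(i+1) * (q.choose i:ℚ)/(x+((i:ℚ)+1)))
        = -(∑ k ∈ range (q+1), (-1:ℚ)^k * (q.choose k:ℚ)/((x+1)+k)) := by
      rw [← Finset.sum_neg_distrib]
      refine Finset.sum_congr rfl fun i _ => ?_
      rw [pow_succ]
      ring
    have hmain : (∑ k ∈ range (q+2), (-1:ℚ)^k * ((q+1).choose k : ℚ) / (x + k))
        = (∑ k ∈ range (q+1), (-1:ℚ)^k * (q.choose k:ℚ)/(x+k))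
          - (∑ k ∈ range (q+1), (-1:ℚ)^k * (q.choose k:ℚ)/((x+1)+k)) := by
      rw [Finset.sum_range_succ' (fun k => (-1:ℚ)^k * ((q+1).choose k : ℚ) / (x + k)) (q+1)]
      have e1 : ∀ i ∈ range (q+1),
          (-1:ℚ)^(i+1) * (((q+1).choose (i+1) : ℕ) : ℚ) / (x + ((i:ℕ)+1:ℕ))
            = (-1:ℚ)^(i+1) * (q.choose i:ℚ)/(x+((i:ℚ)+1))
              + (-1:ℚ)^(i+1) * (q.choose (i+1):ℚ)/(x+((i:ℚ)+1)) := by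
        intro i _
        rw [Nat.choose_succ_succ]
        push_cast
        ring
      rw [Finset.sum_congr rfl e1, Finset.sum_add_distrib, h1, h2]
      simp
      ring
    rw [hmain, ih x hxq, ih (x+1) hx1]
    have hP : ∀ (y : ℚ) (n : ℕ), (∀ k : ℕ, k ≤ n → y + k ≠ 0) →
        (∏ k ∈ range (n+1), (y + (k:ℚ))) ≠ 0 := by
      intro y n hy
      refine Finset.prod_ne_zero_iff.mpr fun k hk => hy k (by simpa using Nat.lt_succ_iff.mp (Finset.mem_range.mp hk))
    have hA := hP x q hxq
    have hB := hP (x+1) q hx1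
    have hC := hP x (q+1) hx
    have hrel3 : x * (∏ k ∈ range (q+1), ((x+1) + (k:ℚ)))
        = (∏ k ∈ range (q+1), (x + (k:ℚ))) * (x + (q:ℚ) + 1) := by
      have l : x * (∏ k ∈ range (q+1), ((x+1) + (k:ℚ))) = ∏ k ∈ range (q+1+1), (x + (k:ℚ)) := by
        rw [Finset.prod_range_succ' (fun k => x + (k:ℚ)) (q+1)]
        rw [Finset.prod_congr rfl (fun i (_ : i ∈ range (q+1)) =>
          (by push_cast; ring : x + (((i+1 : ℕ)):ℚ) = (x+1) + (i:ℚ)))]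
        push_cast
        ring
      have r : (∏ k ∈ range (q+1+1), (x + (k:ℚ))) = (∏ k ∈ range (q+1), (x + (k:ℚ))) * (x + (q:ℚ) + 1) := by
        rw [Finset.prod_range_succ]
        push_cast
        ring
      rw [l, r]
    rw [Nat.factorial_succ]
    push_cast
    rw [div_sub_div _ _ hA hB, div_eq_div_iff (mul_ne_zero hA hB) hC]
    have hCe : (∏ k ∈ range (q+1+1), (x + (k:ℚ))) = (∏ k ∈ range (q+1), (x + (k:ℚ))) * (x + (q:ℚ) + 1) := by
      rw [Finset.prod_range_succ]; push_cast; ring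
    rw [hCe]
    linear_combination ((q.factorial:ℚ) * ∏ k ∈ range (q+1), (x + (k:ℚ))) * hrel3

lemma prod_half (q : ℕ) : (∏ k ∈ range (q+1), ((1:ℚ)/2 + (k:ℚ)))
    = ((2*q+1)‼ : ℚ) / 2^(q+1) := by
  induction q with
  | zero => simp [Nat.doubleFactorial]
  | succ q ih =>
    rw [Finset.prod_range_succ, ih]
    have : 2*(q+1)+1 = (2*q+1)+2 := by ring
    rw [this, Nat.doubleFactorial_add_two]
    push_cast
    field_simp
    ring

lemma half_ne (q : ℕ) : ∀ k : ℕ, k ≤ q → (1:ℚ)/2 + (k:ℚ) ≠ 0 := by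
  intro k _
  positivity

/-- The alternating sum `∑_{k=0}^q (−1)^k·C(q,k)/(2k+1)` equals `4^q·(q!)²/(2q+1)!`;
equivalently, `∑_{k=0}^q (−1)^{q−k}·C(q,k)/(k + 1/2) = 2·(−1)^q·(2q)‼/(2q+1)‼`. -/
theorem alternating_binomial_sum (q : ℕ) :
    (∑ k ∈ range (q + 1), (-1 : ℚ) ^ k * (q.choose k : ℚ) / (2 * k + 1))
      = 4 ^ q * (q.factorial : ℚ) ^ 2 / ((2 * q + 1).factorial : ℚ) ∧
    (∑ k ∈ range (q + 1), (-1 : ℚ) ^ (q - k) * (q.choose k : ℚ) / ((k : ℚ) + 1 / 2))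
      = 2 * (-1 : ℚ) ^ q * ((2 * q)‼ : ℚ) / (((2 * q + 1)‼ : ℚ)) := by
  have hkey := key q ((1:ℚ)/2) (half_ne q)
  rw [prod_half q] at hkey
  have hdf : ((2*q+1)‼ : ℚ) ≠ 0 := by positivity
  have hfac : ((2*q+1).factorial : ℚ) = ((2*q+1)‼ : ℚ) * ((2*q)‼ : ℚ) := by
    rw [Nat.factorial_eq_mul_doubleFactorial (2*q)]
    push_cast; ring
  have hdf2 : ((2*q)‼ : ℚ) = 2^q * (q.factorial : ℚ) := by
    rw [Nat.doubleFactorial_two_mul]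
    push_cast; ring
  constructor
  · have e : ∀ k ∈ range (q+1),
        (-1 : ℚ) ^ k * (q.choose k : ℚ) / (2 * k + 1)
          = (1/2) * ((-1 : ℚ) ^ k * (q.choose k : ℚ) / ((1:ℚ)/2 + (k:ℚ))) := by
      intro k _
      have h1 : (2*(k:ℚ)+1) ≠ 0 := by positivity
      have h2 : ((1:ℚ)/2+(k:ℚ)) ≠ 0 := by positivity
      rw [show (2*(k:ℚ)+1) = 2*((1:ℚ)/2+(k:ℚ)) by ring, div_mul_eq_div_div_swap]
      ring
    rw [Finset.sum_congr rfl e, ← Finset.mul_sum, hkey, hfac, hdf2,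
      show (4:ℚ)^q = 2^q * 2^q by rw [← mul_pow]; norm_num]
    field_simp
    ring
  · have e : ∀ k ∈ range (q+1),
        (-1 : ℚ) ^ (q - k) * (q.choose k : ℚ) / ((k : ℚ) + 1 / 2)
          = (-1:ℚ)^q * ((-1 : ℚ) ^ k * (q.choose k : ℚ) / ((1:ℚ)/2 + (k:ℚ))) := by
      intro k hk
      have hk' : k ≤ q := Nat.lt_succ_iff.mp (Finset.mem_range.mp hk)
      have hpow : (-1:ℚ)^(q-k) = (-1:ℚ)^q * (-1:ℚ)^k := by
        have h1 : (-1:ℚ)^(q-k) * ((-1:ℚ)^k * (-1:ℚ)^k) = (-1:ℚ)^(q-k) := by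
          rw [← pow_add]
          simp [pow_add, ← two_mul, pow_mul]
        calc (-1:ℚ)^(q-k) = (-1:ℚ)^(q-k) * (-1:ℚ)^k * (-1:ℚ)^k := by rw [mul_assoc, h1]
          _ = (-1:ℚ)^((q-k)+k) * (-1:ℚ)^k := by rw [pow_add]
          _ = (-1:ℚ)^q * (-1:ℚ)^k := by rw [Nat.sub_add_cancel hk']
      rw [hpow]
      have : (k:ℚ) + 1/2 = (1:ℚ)/2 + (k:ℚ) := by ring
      rw [this]
      ring
    rw [Finset.sum_congr rfl e, ← Finset.mul_sum, hkey, hdf2]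
    field_simp
    ring
end

section
/- Let p ≥ 1 be a natural number, let D be a symmetric positive-definite real p×p matrix, let c > 0 be real, and let q be a real number with 2q > p. Then the function ξ ↦ (c² + ξᵀDξ)^{−q} is integrable on ℝ^p and ∫_{ℝ^p} (c² + ξᵀDξ)^{−q} dξ = c^{p − 2q} · π^{p/2} · Γ(q − p/2)/(Γ(q) · √(det D)). -/
open MeasureTheory Real Matrix

/-!
Writing `Γ(q) b^{-q} = ∫₀^∞ t^{q-1} e^{-bt} dt` with `b = c² + ‖y‖²` and exchanging the order of
integration (Tonelli) turns the integral into `∫₀^∞ t^{q-1} e^{-c²t} (π/t)^{p/2} dt`, which is again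
a Gamma integral, `Γ(q - p/2) (c²)^{p/2-q}`. A factorisation `D = BᵀB` turns `ξᵀDξ` into `‖Bξ‖²`,
and the substitution `y = Bξ` contributes `|det B|⁻¹ = (det D)^{-1/2}`.
-/

lemma lintegral_rpow_mul_exp_neg_mul_Ioi {s r : ℝ} (hs : 0 < s) (hr : 0 < r) :
    ∫⁻ t in Set.Ioi (0 : ℝ), ENNReal.ofReal (t ^ (s - 1) * rexp (-(r * t)))
      = ENNReal.ofReal ((1 / r) ^ s * Gamma s) := by
  have hval := integral_rpow_mul_exp_neg_mul_Ioi hs hr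
  rw [← hval, ofReal_integral_eq_lintegral_ofReal]
  · exact Integrable.of_integral_ne_zero (by rw [hval]; positivity)
  · filter_upwards [ae_restrict_mem measurableSet_Ioi] with t (ht : 0 < t)
    positivity

section InnerProductSpace

variable {V : Type*} [NormedAddCommGroup V] [InnerProductSpace ℝ V] [FiniteDimensional ℝ V]
  [MeasurableSpace V] [BorelSpace V]

lemma lintegral_exp_neg_mul_sq_norm {b : ℝ} (hb : 0 < b) :
    ∫⁻ x : V, ENNReal.ofReal (rexp (-b * ‖x‖ ^ 2))
      = ENNReal.ofReal ((π / b) ^ (Module.finrank ℝ V / 2 : ℝ)) := by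
  have hval := GaussianFourier.integral_rexp_neg_mul_sq_norm (V := V) hb
  rw [← hval, ofReal_integral_eq_lintegral_ofReal]
  · exact Integrable.of_integral_ne_zero (by rw [hval]; positivity)
  · exact Filter.Eventually.of_forall fun x => (exp_pos _).le

lemma lintegral_rpow_mul_exp_neg_add_sq_norm_mul (q a : ℝ) {t : ℝ} (ht : 0 < t) :
    ∫⁻ x : V, ENNReal.ofReal (t ^ (q - 1) * rexp (-((a + ‖x‖ ^ 2) * t)))
      = ENNReal.ofReal (π ^ (Module.finrank ℝ V / 2 : ℝ)
          * (t ^ (q - Module.finrank ℝ V / 2 - 1) * rexp (-(a * t)))) := by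
  have hsplit : ∀ x : V, t ^ (q - 1) * rexp (-((a + ‖x‖ ^ 2) * t))
      = t ^ (q - 1) * rexp (-(a * t)) * rexp (-t * ‖x‖ ^ 2) := by
    intro x
    rw [mul_assoc, ← exp_add]
    ring_nf
  simp_rw [hsplit, ENNReal.ofReal_mul (by positivity : 0 ≤ t ^ (q - 1) * rexp (-(a * t)))]
  rw [lintegral_const_mul' _ _ ENNReal.ofReal_ne_top, lintegral_exp_neg_mul_sq_norm ht,
    ← ENNReal.ofReal_mul (by positivity)]
  congr 1
  have hexp : t ^ (q - Module.finrank ℝ V / 2 - 1)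
      = t ^ (q - 1) * (t ^ (Module.finrank ℝ V / 2 : ℝ))⁻¹ := by
    rw [← rpow_neg ht.le, ← rpow_add ht]
    ring_nf
  rw [hexp, div_rpow pi_pos.le ht.le]
  field_simp

theorem integral_add_sq_norm_rpow_neg {a q : ℝ} (ha : 0 < a)
    (hq : (Module.finrank ℝ V : ℝ) < 2 * q) :
    ∫ x : V, (a + ‖x‖ ^ 2) ^ (-q)
      = π ^ (Module.finrank ℝ V / 2 : ℝ) * Gamma (q - Module.finrank ℝ V / 2) / Gamma q
          * a ^ (Module.finrank ℝ V / 2 - q) := by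
  set n : ℝ := (Module.finrank ℝ V : ℝ)
  have hq₀ : 0 < q := by linarith [(Module.finrank ℝ V).cast_nonneg (α := ℝ)]
  have hs : 0 < q - n / 2 := by linarith
  have hbase : ∀ x : V, 0 < a + ‖x‖ ^ 2 := fun x => by positivity
  have hmellin : ∀ x : V, ENNReal.ofReal ((a + ‖x‖ ^ 2) ^ (-q)) = ENNReal.ofReal (Gamma q)⁻¹
      * ∫⁻ t in Set.Ioi (0 : ℝ), ENNReal.ofReal (t ^ (q - 1) * rexp (-((a + ‖x‖ ^ 2) * t))) := by
    intro x
    rw [lintegral_rpow_mul_exp_neg_mul_Ioi hq₀ (hbase x), ← ENNReal.ofReal_mul (by positivity),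
      one_div, inv_rpow (hbase x).le, rpow_neg (hbase x).le]
    field_simp
  have hmeas : Measurable fun z : V × ℝ =>
      ENNReal.ofReal (z.2 ^ (q - 1) * rexp (-((a + ‖z.1‖ ^ 2) * z.2))) := by
    apply Measurable.ennreal_ofReal
    fun_prop
  have hlintegral : ∫⁻ x : V, ENNReal.ofReal ((a + ‖x‖ ^ 2) ^ (-q))
      = ENNReal.ofReal (π ^ (n / 2) * Gamma (q - n / 2) / Gamma q * a ^ (n / 2 - q)) := by
    calc ∫⁻ x : V, ENNReal.ofReal ((a + ‖x‖ ^ 2) ^ (-q))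
        = ENNReal.ofReal (Gamma q)⁻¹ * ∫⁻ t in Set.Ioi (0 : ℝ), ∫⁻ x : V,
            ENNReal.ofReal (t ^ (q - 1) * rexp (-((a + ‖x‖ ^ 2) * t))) := by
          rw [lintegral_congr hmellin, lintegral_const_mul' _ _ ENNReal.ofReal_ne_top,
            lintegral_lintegral_swap hmeas.aemeasurable]
      _ = ENNReal.ofReal (Gamma q)⁻¹ * ∫⁻ t in Set.Ioi (0 : ℝ), ENNReal.ofReal (π ^ (n / 2))
            * ENNReal.ofReal (t ^ (q - n / 2 - 1) * rexp (-(a * t))) := by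
          congr 1
          refine setLIntegral_congr_fun measurableSet_Ioi fun t (ht : 0 < t) => ?_
          rw [lintegral_rpow_mul_exp_neg_add_sq_norm_mul q a ht,
            ENNReal.ofReal_mul (by positivity)]
      _ = ENNReal.ofReal (π ^ (n / 2) * Gamma (q - n / 2) / Gamma q * a ^ (n / 2 - q)) := by
          rw [lintegral_const_mul' _ _ ENNReal.ofReal_ne_top,
            lintegral_rpow_mul_exp_neg_mul_Ioi hs ha, ← ENNReal.ofReal_mul (by positivity),
            ← ENNReal.ofReal_mul (by positivity), one_div, inv_rpow ha.le, ← rpow_neg ha.le,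
            neg_sub]
          congr 1
          ring
  rw [integral_eq_lintegral_of_nonneg_ae (Filter.Eventually.of_forall fun x => by positivity)
    ((by fun_prop : Measurable fun x : V => (a + ‖x‖ ^ 2) ^ (-q)).aestronglyMeasurable),
    hlintegral, ENNReal.toReal_ofReal (by positivity)]

end InnerProductSpace

theorem integral_add_dotProduct_self_rpow_neg {ι : Type*} [Fintype ι] {a q : ℝ} (ha : 0 < a)
    (hq : (Fintype.card ι : ℝ) < 2 * q) :
    ∫ y : ι → ℝ, (a + y ⬝ᵥ y) ^ (-q)
      = π ^ (Fintype.card ι / 2 : ℝ) * Gamma (q - Fintype.card ι / 2) / Gamma q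
          * a ^ (Fintype.card ι / 2 - q) := by
  have hnorm : ∀ y : ι → ℝ, ‖WithLp.toLp 2 y‖ ^ 2 = y ⬝ᵥ y := fun y => by
    rw [EuclideanSpace.real_norm_sq_eq]
    simp [dotProduct, sq]
  rw [← finrank_euclideanSpace (𝕜 := ℝ) (ι := ι)] at hq ⊢
  rw [← integral_add_sq_norm_rpow_neg ha hq,
    ← (EuclideanSpace.volume_preserving_symm_measurableEquiv_toLp ι).symm.integral_comp']
  simp only [MeasurableEquiv.symm_symm, MeasurableEquiv.coe_toLp, hnorm]

theorem integral_comp_linearMap {E F : Type*} [NormedAddCommGroup E] [NormedSpace ℝ E]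
    [MeasurableSpace E] [BorelSpace E] [FiniteDimensional ℝ E] [NormedAddCommGroup F]
    [NormedSpace ℝ F] (μ : Measure E) [μ.IsAddHaarMeasure] {f : E →ₗ[ℝ] E}
    (hf : LinearMap.det f ≠ 0) (g : E → F) :
    ∫ x, g (f x) ∂μ = |LinearMap.det f|⁻¹ • ∫ x, g x ∂μ := by
  have hemb := (f.equivOfDetNeZero hf).toContinuousLinearEquiv.toHomeomorph.measurableEmbedding
  refine (hemb.integral_map g).symm.trans ?_
  change ∫ x, g x ∂(Measure.map f μ) = _
  rw [Measure.map_linearMap_addHaar_eq_smul_addHaar μ hf, integral_smul_measure,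
    ENNReal.toReal_ofReal (abs_nonneg _), abs_inv]

theorem integral_comp_mulVec {ι F : Type*} [Fintype ι] [DecidableEq ι] [NormedAddCommGroup F]
    [NormedSpace ℝ F] {B : Matrix ι ι ℝ} (hB : B.det ≠ 0) (g : (ι → ℝ) → F) :
    ∫ x, g (B *ᵥ x) = |B.det|⁻¹ • ∫ x, g x := by
  rw [← LinearMap.det_toLin'] at hB ⊢
  exact integral_comp_linearMap volume hB g

open scoped MatrixOrder in
theorem Matrix.PosSemidef.exists_eq_transpose_mul_self {n : Type*} [Fintype n] [DecidableEq n]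
    {D : Matrix n n ℝ} (hD : D.PosSemidef) : ∃ B : Matrix n n ℝ, D = Bᵀ * B := by
  obtain ⟨B, rfl⟩ := CStarAlgebra.nonneg_iff_eq_star_mul_self.mp hD.nonneg
  exact ⟨B, by rw [star_eq_conjTranspose, conjTranspose_eq_transpose_of_trivial]⟩

theorem integral_quadratic_form_rpow_general (p : ℕ)
    (D : Matrix (Fin p) (Fin p) ℝ) (hDpos : D.PosDef)
    (c : ℝ) (hc : 0 < c) (q : ℝ) (hq : (p : ℝ) < 2 * q) :
    Integrable (fun ξ : Fin p → ℝ => (c ^ 2 + ξ ⬝ᵥ D.mulVec ξ) ^ (-q)) ∧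
    (∫ ξ : Fin p → ℝ, (c ^ 2 + ξ ⬝ᵥ D.mulVec ξ) ^ (-q))
      = c ^ ((p : ℝ) - 2 * q) * π ^ ((p : ℝ) / 2) * Gamma (q - (p : ℝ) / 2)
          / (Gamma q * Real.sqrt D.det) := by
  obtain ⟨B, rfl⟩ := hDpos.posSemidef.exists_eq_transpose_mul_self
  have hdet : (Bᵀ * B).det = B.det ^ 2 := by rw [det_mul, det_transpose, sq]
  have hB : B.det ≠ 0 := by simpa [hdet] using hDpos.det_pos.ne'
  have hquad : ∀ ξ : Fin p → ℝ, ξ ⬝ᵥ (Bᵀ * B) *ᵥ ξ = (B *ᵥ ξ) ⬝ᵥ (B *ᵥ ξ) := fun ξ => by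
    rw [← mulVec_mulVec, dotProduct_mulVec, vecMul_transpose]
  have hval : ∫ ξ : Fin p → ℝ, (c ^ 2 + ξ ⬝ᵥ (Bᵀ * B) *ᵥ ξ) ^ (-q)
      = c ^ ((p : ℝ) - 2 * q) * π ^ ((p : ℝ) / 2) * Gamma (q - (p : ℝ) / 2)
          / (Gamma q * Real.sqrt (Bᵀ * B).det) := by
    simp_rw [hquad]
    rw [integral_comp_mulVec hB (fun y => (c ^ 2 + y ⬝ᵥ y) ^ (-q)),
      integral_add_dotProduct_self_rpow_neg (by positivity) (by simpa using hq), hdet,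
      sqrt_sq_eq_abs, Fintype.card_fin, smul_eq_mul, ← rpow_natCast, ← rpow_mul hc.le]
    ring_nf
  refine ⟨Integrable.of_integral_ne_zero ?_, hval⟩
  rw [hval]
  have hdet_pos := hDpos.det_pos
  have hΓ₁ : 0 < Gamma (q - p / 2) := Gamma_pos_of_pos (by linarith)
  have hΓ₂ : 0 < Gamma q := Gamma_pos_of_pos (by linarith [p.cast_nonneg (α := ℝ)])
  positivity

/-- For a symmetric positive-definite `p×p` real matrix `D`, `c > 0` and `2q > p`,
the function `ξ ↦ (c² + ξᵀDξ)^{−q}` is integrable on `ℝ^p` and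
`∫ (c² + ξᵀDξ)^{−q} dξ = c^{p−2q}·π^{p/2}·Γ(q − p/2)/(Γ(q)·√(det D))`. -/
theorem integral_quadratic_form_rpow (p : ℕ) (hp : 1 ≤ p)
    (D : Matrix (Fin p) (Fin p) ℝ) (hDsymm : D.IsSymm) (hDpos : D.PosDef)
    (c : ℝ) (hc : 0 < c) (q : ℝ) (hq : (p : ℝ) < 2 * q) :
    Integrable (fun ξ : Fin p → ℝ => (c ^ 2 + ξ ⬝ᵥ D.mulVec ξ) ^ (-q)) ∧
    (∫ ξ : Fin p → ℝ, (c ^ 2 + ξ ⬝ᵥ D.mulVec ξ) ^ (-q))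
      = c ^ ((p : ℝ) - 2 * q) * π ^ ((p : ℝ) / 2) * Gamma (q - (p : ℝ) / 2)
          / (Gamma q * Real.sqrt D.det) :=
  integral_quadratic_form_rpow_general p D hDpos c hc q hq
end

section
/- Let f ∈ ℂ[x] be a polynomial of degree n ≥ 2 whose n roots x₁, …, x_n are pairwise distinct (equivalently, f is squarefree of degree n). Then for every natural number p with p ≤ n − 2, the sum over the roots Σ_{i=1}^n x_i^p / f'(x_i) equals 0, where f' denotes the derivative of f; note f'(x_i) ≠ 0 for each root since the roots are simple. -/
open Polynomial Finset

/-!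
Write `f = c ∏ (X - xᵢ)` with distinct roots `xᵢ`. Then `f'(xᵢ) = c / wᵢ`, where `wᵢ = ∏_{j ≠ i} (xᵢ - xⱼ)⁻¹`
is the Lagrange nodal weight, and `∑ g(xᵢ) wᵢ` is the coefficient of `X^(n-1)` in the Lagrange
interpolant of `g` at the nodes `xᵢ`. For `deg g < n - 1` that interpolant is `g` itself, so the
coefficient vanishes.
-/

namespace Lagrange

variable {F ι : Type*} [Field F] [DecidableEq ι] {s : Finset ι} {v : ι → F}

theorem coeff_basis_card_sub_one {i : ι} (hi : i ∈ s) :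
    (Lagrange.basis s v i).coeff (#s - 1) = nodalWeight s v i := by
  rw [basis_eq_prod_sub_inv_mul_nodal_div hi, ← nodal_erase_eq_nodal_div hi, coeff_C_mul,
    ← card_erase_of_mem hi, ← natDegree_nodal (v := v), nodal_monic.coeff_natDegree, mul_one]

theorem coeff_interpolate_card_sub_one (r : ι → F) :
    (interpolate s v r).coeff (#s - 1) = ∑ i ∈ s, r i * nodalWeight s v i := by
  rw [interpolate_apply, finsetSum_coeff]
  refine sum_congr rfl fun i hi => ?_
  rw [coeff_C_mul, coeff_basis_card_sub_one hi]

theorem sum_eval_mul_nodalWeight_eq_zero (hvs : Set.InjOn v s) {g : F[X]}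
    (hg : g.natDegree + 1 < #s) : ∑ i ∈ s, g.eval (v i) * nodalWeight s v i = 0 := by
  have hg_lt : g.degree < #s :=
    degree_le_natDegree.trans_lt (by exact_mod_cast (by omega : g.natDegree < #s))
  rw [← coeff_interpolate_card_sub_one, ← eq_interpolate hvs hg_lt]
  exact coeff_eq_zero_of_natDegree_lt (by omega)

end Lagrange

namespace Polynomial.Splits

variable {F : Type*} [Field F] [DecidableEq F] {f : F[X]}

theorem eq_C_leadingCoeff_mul_nodal_roots (hsplit : f.Splits) (hnodup : f.roots.Nodup) :
    f = C f.leadingCoeff * Lagrange.nodal f.roots.toFinset id := by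
  conv_lhs => rw [hsplit.eq_prod_roots]
  rw [Lagrange.nodal_eq, prod_eq_multiset_prod, Multiset.toFinset_val,
    Multiset.dedup_eq_self.mpr hnodup]
  simp

theorem eval_derivative_eq_leadingCoeff_mul_nodalWeight_inv (hsplit : f.Splits)
    (hnodup : f.roots.Nodup) {x : F} (hx : x ∈ f.roots.toFinset) :
    (derivative f).eval x = f.leadingCoeff * (Lagrange.nodalWeight f.roots.toFinset id x)⁻¹ := by
  rw [Lagrange.nodalWeight_eq_eval_derivative_nodal hx, inv_inv]
  conv_lhs => rw [hsplit.eq_C_leadingCoeff_mul_nodal_roots hnodup]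
  rw [derivative_C_mul, eval_mul, eval_C]
  rfl

theorem sum_roots_eval_div_derivative_eq_zero (hsplit : f.Splits) (hsep : f.Separable)
    {g : F[X]} (hg : g.natDegree + 2 ≤ f.natDegree) :
    ∑ x ∈ f.roots.toFinset, g.eval x / (derivative f).eval x = 0 := by
  have hnodup := nodup_roots hsep
  have hcard : #f.roots.toFinset = f.natDegree := by
    rw [Multiset.toFinset_card_of_nodup hnodup, hsplit.natDegree_eq_card_roots]
  calc ∑ x ∈ f.roots.toFinset, g.eval x / (derivative f).eval x
      = f.leadingCoeff⁻¹ *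
          ∑ x ∈ f.roots.toFinset, g.eval (id x) * Lagrange.nodalWeight f.roots.toFinset id x := by
        rw [mul_sum]
        refine sum_congr rfl fun x hx => ?_
        rw [hsplit.eval_derivative_eq_leadingCoeff_mul_nodalWeight_inv hnodup hx, div_eq_mul_inv,
          mul_inv, inv_inv, id]
        ring
    _ = 0 := by
        rw [Lagrange.sum_eval_mul_nodalWeight_eq_zero Function.injective_id.injOn (by omega),
          mul_zero]

end Polynomial.Splits

/-- For a squarefree polynomial `f ∈ ℂ[x]` of degree `n ≥ 2`, whose roots are
therefore pairwise distinct, and every `p ≤ n − 2`, the sum over the roots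
`∑ᵢ xᵢ^p / f'(xᵢ)` vanishes. -/
theorem sum_rootSet_pow_div_derivative_eq_zero (f : Polynomial ℂ)
    (hsf : Squarefree f) (hdeg : 2 ≤ f.natDegree)
    (p : ℕ) (hp : p ≤ f.natDegree - 2) :
    ∑ x ∈ f.roots.toFinset, x ^ p / (Polynomial.derivative f).eval x = 0 := by
  simpa using (IsAlgClosed.splits f).sum_roots_eval_div_derivative_eq_zero
    (PerfectField.separable_iff_squarefree.mpr hsf) (g := X ^ p)
    (by rw [natDegree_X_pow]; omega)
end
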